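/- arXiv:2112.03196 — 2 statements merged into one kernel-verified Lean document; each statement's English description precedes it below -/
import Mathlib

section
/- The thresholds defined by α_t = α η γ̃_t + α ∑_{j≥1} δ^{t−ρ_j} γ_{t−ρ_j} satisfy, for every T ≥ 1, the oracle bound ∑_{t=1}^T δ^{T−t} α_t ≤ α · (R_δ(T) + η); equivalently the quantity P(T) = α(R_δ(T) + η) − ∑_{t=1}^T δ^{T−t} α_t is non-negative for all T. -/
/-- The time `ρ_j` of the `j`-th rejection: `min {t ≥ 0 : ∑_{i=1}^t R_i ≥ j}`,
equal to `⊤` (infinity) if no such time exists. -/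
noncomputable def rejTime (R : ℕ → ℝ) (j : ℕ) : ℕ∞ :=
  sInf {n : ℕ∞ | ∃ m : ℕ, n = (m : ℕ∞) ∧ (j : ℝ) ≤ ∑ i ∈ Finset.Icc 1 m, R i}

/-- The term `δ^{t−ρ} γ_{t−ρ}`, interpreted as `0` when `ρ = ∞`. -/
noncomputable def decayTerm (δ : ℝ) (γ : ℤ → ℝ) (t : ℕ) (ρ : ℕ∞) : ℝ :=
  ρ.recTopCoe 0 fun r => δ ^ (t - r) * γ ((t : ℤ) - (r : ℤ))

/-!
Exchanging the order of summation, the discounted sum of the thresholds splits into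
`α η ∑_t δ^{T-t} γ̃_t ≤ α η` and, for each rejection time `r = ρ_j ≤ T`, the contribution
`α ∑_t δ^{T-t} δ^{t-r} γ_{t-r} = α δ^{T-r} ∑_s γ_s ≤ α δ^{T-r}`. Distinct `j` have distinct
finite rejection times and `R_r = 1` at each of them, so these contributions add up to at most
`α R_δ(T)`.
-/

open Finset

section RejectionTimes

variable {R : ℕ → ℝ}

theorem rejTime_le_of_le_sum {j m : ℕ} (h : (j : ℝ) ≤ ∑ i ∈ Icc 1 m, R i) :
    rejTime R j ≤ m :=
  sInf_le ⟨m, rfl, h⟩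

theorem sum_lt_of_lt_rejTime {j m : ℕ} (h : (m : ℕ∞) < rejTime R j) :
    ∑ i ∈ Icc 1 m, R i < j :=
  lt_of_not_ge fun hle => (rejTime_le_of_le_sum hle).not_gt h

theorem le_sum_of_rejTime_eq {j r : ℕ} (h : rejTime R j = r) :
    (j : ℝ) ≤ ∑ i ∈ Icc 1 r, R i := by
  have hne : {n : ℕ∞ | ∃ m : ℕ, n = m ∧ (j : ℝ) ≤ ∑ i ∈ Icc 1 m, R i}.Nonempty := by
    by_contra hempty
    rw [Set.not_nonempty_iff_eq_empty] at hempty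
    simp [rejTime, hempty] at h
  obtain ⟨m, hm, hjm⟩ := csInf_mem hne
  rw [← rejTime, h, Nat.cast_inj] at hm
  exact hm ▸ hjm

theorem sum_Icc_le_of_le_one (hR1 : ∀ t, R t ≤ 1) (m : ℕ) : ∑ i ∈ Icc 1 m, R i ≤ m := by
  simpa using sum_le_card_nsmul (Icc 1 m) R 1 fun i _ => hR1 i

theorem le_rejTime (hR1 : ∀ t, R t ≤ 1) (j : ℕ) : (j : ℕ∞) ≤ rejTime R j := by
  refine le_sInf ?_
  rintro _ ⟨m, rfl, hjm⟩
  exact_mod_cast hjm.trans (sum_Icc_le_of_le_one hR1 m)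

theorem rejTime_lt_of_lt (hR1 : ∀ t, R t ≤ 1) {j k r : ℕ} (hjk : j < k)
    (hk : rejTime R k = r) : rejTime R j < r := by
  have hkr := le_sum_of_rejTime_eq hk
  obtain ⟨m, rfl⟩ : ∃ m, r = m + 1 := by
    have : k ≤ r := by exact_mod_cast hk ▸ le_rejTime hR1 k
    exact Nat.exists_eq_add_one.mpr (by omega)
  rw [sum_Icc_succ_top (by omega)] at hkr
  have hjm : (j : ℝ) ≤ ∑ i ∈ Icc 1 m, R i := by
    have : ((j + 1 : ℕ) : ℝ) ≤ k := by exact_mod_cast hjk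
    push_cast at this
    linarith [hR1 (m + 1)]
  exact (rejTime_le_of_le_sum hjm).trans_lt (by exact_mod_cast m.lt_succ_self)

theorem rejTime_injOn (hR1 : ∀ t, R t ≤ 1) : Set.InjOn (rejTime R) {j | rejTime R j ≠ ⊤} := by
  intro j hj k hk hjk
  lift rejTime R j to ℕ using hj with r hr
  rcases lt_trichotomy j k with hlt | heq | hgt
  · exact absurd hr.symm (rejTime_lt_of_lt hR1 hlt hjk.symm).ne
  · exact heq
  · exact absurd hjk.symm (rejTime_lt_of_lt hR1 hgt hr.symm).ne

theorem eq_one_of_rejTime_eq (hR : ∀ t, R t = 0 ∨ R t = 1) {j r : ℕ} (hj : 1 ≤ j)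
    (h : rejTime R j = r) : R r = 1 := by
  have hR1 : ∀ t, R t ≤ 1 := fun t => by rcases hR t with h | h <;> simp [h]
  obtain ⟨m, rfl⟩ : ∃ m, r = m + 1 := by
    have : j ≤ r := by exact_mod_cast h ▸ le_rejTime hR1 j
    exact Nat.exists_eq_add_one.mpr (by omega)
  have hjr := le_sum_of_rejTime_eq h
  have hmj := sum_lt_of_lt_rejTime (h ▸ (by exact_mod_cast m.lt_succ_self) : (m : ℕ∞) < rejTime R j)
  rw [sum_Icc_succ_top (by omega)] at hjr
  exact (hR (m + 1)).resolve_left fun h0 => by linarith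

theorem tsum_rejTime_le (hR : ∀ t, R t = 0 ∨ R t = 1) {φ : ℕ∞ → ℝ} (hφ : ∀ r : ℕ, 0 ≤ φ r)
    (T : ℕ) (hφT : ∀ ρ, (T : ℕ∞) < ρ → φ ρ = 0) :
    ∑' j, φ (rejTime R (j + 1)) ≤ ∑ r ∈ Icc 1 T, R r * φ r := by
  have hR1 : ∀ t, R t ≤ 1 := fun t => by rcases hR t with h | h <;> simp [h]
  set J := (range T).filter fun j => rejTime R (j + 1) ≤ T
  set g : ℕ → ℕ := fun j => (rejTime R (j + 1)).toNat
  have hJ : ∀ j ∈ J, rejTime R (j + 1) = g j := fun j hj =>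
    (ENat.natCast_toNat ((mem_filter.mp hj).2.trans_lt (ENat.natCast_lt_top T)).ne).symm
  have hfin : ∑' j, φ (rejTime R (j + 1)) = ∑ j ∈ J, φ (rejTime R (j + 1)) := by
    refine tsum_eq_sum fun j hj => hφT _ ?_
    by_cases hjT : j < T
    · simpa [J, hjT] using hj
    · exact (by exact_mod_cast Nat.lt_succ_of_le (not_lt.mp hjT) : (T : ℕ∞) < (j + 1 : ℕ)).trans_le
        (le_rejTime hR1 _)
  have hinj : Set.InjOn g J := by
    intro j hj k hk hjk
    refine Nat.succ_injective (rejTime_injOn hR1 ?_ ?_ ?_)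
    · exact (hJ j hj).trans_ne (ENat.natCast_ne_top _)
    · exact (hJ k hk).trans_ne (ENat.natCast_ne_top _)
    · rw [hJ j hj, hJ k hk]; exact_mod_cast hjk
  have hsub : J.image g ⊆ Icc 1 T := by
    intro r hr
    obtain ⟨j, hj, rfl⟩ := mem_image.mp hr
    have h1 : j + 1 ≤ g j := by exact_mod_cast (le_rejTime hR1 (j + 1)).trans_eq (hJ j hj)
    have h2 : g j ≤ T := by exact_mod_cast (hJ j hj).symm.trans_le (mem_filter.mp hj).2
    exact mem_Icc.mpr ⟨by omega, h2⟩
  calc ∑' j, φ (rejTime R (j + 1))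
      = ∑ j ∈ J, R (g j) * φ (g j) := by
        rw [hfin]
        refine sum_congr rfl fun j hj => ?_
        rw [eq_one_of_rejTime_eq hR (by omega) (hJ j hj), one_mul, ← hJ j hj]
    _ = ∑ r ∈ J.image g, R r * φ r := by rw [sum_image hinj]
    _ ≤ ∑ r ∈ Icc 1 T, R r * φ r :=
        sum_le_sum_of_subset_of_nonneg hsub fun r _ _ =>
          mul_nonneg (by rcases hR r with h | h <;> simp [h]) (hφ r)

end RejectionTimes

section DecayTerm

variable {δ : ℝ} {γ : ℤ → ℝ}

theorem decayTerm_coe (t r : ℕ) :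
    decayTerm δ γ t r = δ ^ (t - r) * γ ((t : ℤ) - (r : ℤ)) := by
  simp [decayTerm]

theorem decayTerm_nonneg (hδ : 0 ≤ δ) (hγ : ∀ t, 0 ≤ γ t) (t : ℕ) (ρ : ℕ∞) :
    0 ≤ decayTerm δ γ t ρ := by
  induction ρ using ENat.recTopCoe with
  | top => simp [decayTerm]
  | coe r => rw [decayTerm_coe]; exact mul_nonneg (pow_nonneg hδ _) (hγ _)

theorem decayTerm_eq_zero_of_le (hγ : ∀ t : ℤ, t ≤ 0 → γ t = 0) {t : ℕ} {ρ : ℕ∞}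
    (h : (t : ℕ∞) ≤ ρ) : decayTerm δ γ t ρ = 0 := by
  induction ρ using ENat.recTopCoe with
  | top => simp [decayTerm]
  | coe r =>
    have : t ≤ r := by exact_mod_cast h
    rw [decayTerm_coe, hγ _ (by omega), mul_zero]

theorem pow_sub_mul_decayTerm (hγ : ∀ t : ℤ, t ≤ 0 → γ t = 0) {t T : ℕ} (ht : t ≤ T) (r : ℕ) :
    δ ^ (T - t) * decayTerm δ γ t r = δ ^ (T - r) * γ ((t : ℤ) - (r : ℤ)) := by
  rcases le_or_gt t r with htr | hrt
  · rw [decayTerm_eq_zero_of_le hγ (by exact_mod_cast htr), hγ _ (by omega)]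
    simp
  · rw [decayTerm_coe, ← mul_assoc, ← pow_add, show T - t + (t - r) = T - r by omega]

theorem sum_Icc_sub_eq (hγ : ∀ t : ℤ, t ≤ 0 → γ t = 0) (T r : ℕ) :
    ∑ t ∈ Icc 1 T, γ ((t : ℤ) - (r : ℤ)) = ∑ s ∈ Icc 1 (T - r), γ s := by
  symm
  refine sum_bij_ne_zero (fun s _ _ => s + r) ?_ ?_ ?_ ?_
  · intro s hs _
    simp only [mem_Icc] at hs ⊢
    omega
  · intro s _ _ s' _ _ h
    omega
  · intro t ht hγt
    have hrt : r < t := by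
      by_contra h
      exact hγt (hγ _ (by omega))
    refine ⟨t - r, ?_, ?_, ?_⟩
    · simp only [mem_Icc] at ht ⊢
      omega
    · rwa [Nat.cast_sub hrt.le]
    · omega
  · intro s _ _
    push_cast
    ring_nf

theorem sum_pow_sub_mul_decayTerm_le (hγ : ∀ t : ℤ, t ≤ 0 → γ t = 0)
    (hγ_sum : ∀ T : ℕ, ∑ t ∈ Icc 1 T, γ (t : ℤ) ≤ 1) (hδ : 0 ≤ δ) (T r : ℕ) :
    ∑ t ∈ Icc 1 T, δ ^ (T - t) * decayTerm δ γ t r ≤ δ ^ (T - r) := by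
  calc ∑ t ∈ Icc 1 T, δ ^ (T - t) * decayTerm δ γ t r
      = δ ^ (T - r) * ∑ t ∈ Icc 1 T, γ ((t : ℤ) - (r : ℤ)) := by
        rw [mul_sum]
        exact sum_congr rfl fun t ht => pow_sub_mul_decayTerm hγ (mem_Icc.mp ht).2 r
    _ ≤ δ ^ (T - r) * 1 := by
        rw [sum_Icc_sub_eq hγ]
        exact mul_le_mul_of_nonneg_left (hγ_sum _) (pow_nonneg hδ _)
    _ = δ ^ (T - r) := mul_one _

theorem sum_pow_sub_mul_tsum_decayTerm_rejTime_le (hδ : 0 ≤ δ) (hγ_nonneg : ∀ t, 0 ≤ γ t)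
    (hγ_zero : ∀ t : ℤ, t ≤ 0 → γ t = 0) (hγ_sum : ∀ T : ℕ, ∑ t ∈ Icc 1 T, γ (t : ℤ) ≤ 1)
    {R : ℕ → ℝ} (hR : ∀ t, R t = 0 ∨ R t = 1) (T : ℕ) :
    ∑ t ∈ Icc 1 T, δ ^ (T - t) * ∑' j, decayTerm δ γ t (rejTime R (j + 1))
      ≤ ∑ r ∈ Icc 1 T, δ ^ (T - r) * R r := by
  have hrej : ∀ t ∈ Icc 1 T, ∑' j, decayTerm δ γ t (rejTime R (j + 1))
      ≤ ∑ r ∈ Icc 1 T, R r * decayTerm δ γ t r := fun t ht =>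
    have htT : (t : ℕ∞) ≤ T := by exact_mod_cast (mem_Icc.mp ht).2
    tsum_rejTime_le hR (fun r => decayTerm_nonneg hδ hγ_nonneg t r) T fun ρ hρ =>
      decayTerm_eq_zero_of_le hγ_zero (htT.trans hρ.le)
  calc ∑ t ∈ Icc 1 T, δ ^ (T - t) * ∑' j, decayTerm δ γ t (rejTime R (j + 1))
      ≤ ∑ t ∈ Icc 1 T, δ ^ (T - t) * ∑ r ∈ Icc 1 T, R r * decayTerm δ γ t r := by
        gcongr with t ht
        exact hrej t ht
    _ = ∑ r ∈ Icc 1 T, R r * ∑ t ∈ Icc 1 T, δ ^ (T - t) * decayTerm δ γ t r := by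
        simp only [mul_sum]
        rw [sum_comm]
        simp only [mul_left_comm]
    _ ≤ ∑ r ∈ Icc 1 T, R r * δ ^ (T - r) := by
        gcongr with r
        · rcases hR r with h | h <;> simp [h]
        · exact sum_pow_sub_mul_decayTerm_le hγ_zero hγ_sum hδ T r
    _ = ∑ r ∈ Icc 1 T, δ ^ (T - r) * R r := by simp only [mul_comm]

end DecayTerm

theorem lord_decay_oracle_bound_general (δ α η : ℝ)
    (hδ : δ ∈ Set.Ioc (0 : ℝ) 1) (hα : α ∈ Set.Ioo (0 : ℝ) 1) (hη : 0 < η)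
    (γ : ℤ → ℝ) (hγ_nonneg : ∀ t, 0 ≤ γ t) (hγ_zero : ∀ t : ℤ, t ≤ 0 → γ t = 0)
    (hγ_sum : ∀ T : ℕ, ∑ t ∈ Finset.Icc 1 T, γ (t : ℤ) ≤ 1)
    (γ' : ℕ → ℝ)
    (hγ'_sum : ∀ T : ℕ, 1 ≤ T → ∑ t ∈ Finset.Icc 1 T, δ ^ (T - t) * γ' t ≤ 1)
    (R : ℕ → ℝ) (hR : ∀ t, R t = 0 ∨ R t = 1)
    (A : ℕ → ℝ)
    (hA : ∀ t : ℕ, A t = α * η * γ' t + α * ∑' j : ℕ, decayTerm δ γ t (rejTime R (j + 1)))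
    (T : ℕ) (hT : 1 ≤ T) :
    ∑ t ∈ Finset.Icc 1 T, δ ^ (T - t) * A t
      ≤ α * ((∑ t ∈ Finset.Icc 1 T, δ ^ (T - t) * R t) + η) := by
  have hdecay := sum_pow_sub_mul_tsum_decayTerm_rejTime_le hδ.1.le hγ_nonneg hγ_zero hγ_sum hR T
  calc ∑ t ∈ Icc 1 T, δ ^ (T - t) * A t
      = α * η * ∑ t ∈ Icc 1 T, δ ^ (T - t) * γ' t
          + α * ∑ t ∈ Icc 1 T, δ ^ (T - t) * ∑' j, decayTerm δ γ t (rejTime R (j + 1)) := by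
        simp only [hA, mul_sum, ← sum_add_distrib]
        exact sum_congr rfl fun t _ => by ring
    _ ≤ α * η * 1 + α * ∑ t ∈ Icc 1 T, δ ^ (T - t) * R t := by
        have hα0 := hα.1
        gcongr
        exact hγ'_sum T hT
    _ = α * ((∑ t ∈ Icc 1 T, δ ^ (T - t) * R t) + η) := by ring

/-- The memory-decay LORD thresholds `α_t = α η γ̃_t + α ∑_{j≥1} δ^{t−ρ_j} γ_{t−ρ_j}`
satisfy the oracle bound `∑_{t=1}^T δ^{T−t} α_t ≤ α (R_δ(T) + η)` for every `T ≥ 1`. -/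
theorem lord_decay_oracle_bound (δ α η : ℝ)
    (hδ : δ ∈ Set.Ioc (0 : ℝ) 1) (hα : α ∈ Set.Ioo (0 : ℝ) 1) (hη : 0 < η)
    (γ : ℤ → ℝ) (hγ_nonneg : ∀ t, 0 ≤ γ t) (hγ_zero : ∀ t : ℤ, t ≤ 0 → γ t = 0)
    (hγ_anti : ∀ s t : ℤ, 1 ≤ s → s ≤ t → γ t ≤ γ s)
    (hγ_sum : ∀ T : ℕ, ∑ t ∈ Finset.Icc 1 T, γ (t : ℤ) ≤ 1)
    (γ' : ℕ → ℝ) (hγ'_pos : ∀ t, 1 ≤ t → 0 < γ' t)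
    (hγ'_anti : ∀ s t : ℕ, 1 ≤ s → s ≤ t → γ' t ≤ γ' s)
    (hγ'_sum : ∀ T : ℕ, 1 ≤ T → ∑ t ∈ Finset.Icc 1 T, δ ^ (T - t) * γ' t ≤ 1)
    (R : ℕ → ℝ) (hR : ∀ t, R t = 0 ∨ R t = 1)
    (A : ℕ → ℝ)
    (hA : ∀ t : ℕ, A t = α * η * γ' t + α * ∑' j : ℕ, decayTerm δ γ t (rejTime R (j + 1)))
    (T : ℕ) (hT : 1 ≤ T) :
    ∑ t ∈ Finset.Icc 1 T, δ ^ (T - t) * A t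
      ≤ α * ((∑ t ∈ Finset.Icc 1 T, δ ^ (T - t) * R t) + η) :=
  lord_decay_oracle_bound_general δ α η hδ hα hη γ hγ_nonneg hγ_zero hγ_sum γ' hγ'_sum R hR A hA T
    hT
end

section
/- For any w_0 ∈ (0, α), the thresholds defined by α_t = [(τ − λ)( w_0 γ̃_{S_0(t)} + (α − w_0) ∑_{j≥1} δ^{t−ρ_j} γ_{S_j(t)} )] ∧ λ satisfy, for every T ≥ 1, the bound ∑_{t=1}^T δ^{T−t} α_t · 1{λ < p_t ≤ τ}/(τ − λ) ≤ α · max(R_δ(T), 1). -/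
open Classical in
/-- The number of candidate `p`-values `∑_{i=a}^b 1{λ < p_i ≤ τ}`. -/
noncomputable def candBetween (p : ℕ → ℝ) (lam tau : ℝ) (a b : ℕ) : ℕ :=
  ((Finset.Icc a b).filter fun i => lam < p i ∧ p i ≤ tau).card

/-- The candidate count `S_0(t) = 1 + ∑_{i=1}^{t−1} 1{λ < p_i ≤ τ}` (with `ρ_0 = −∞`). -/
noncomputable def candCount0 (p : ℕ → ℝ) (lam tau : ℝ) (t : ℕ) : ℕ :=
  1 + candBetween p lam tau 1 (t - 1)

/-- The term `δ^{t−ρ_j} γ_{S_j(t)}` where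
`S_j(t) = 1{t > ρ_j} + ∑_{i=ρ_j+1}^{t−1} 1{λ < p_i ≤ τ}`, interpreted as `0`
when `ρ_j = ∞`. -/
noncomputable def addisTerm (δ : ℝ) (γ : ℤ → ℝ) (p : ℕ → ℝ) (lam tau : ℝ)
    (t : ℕ) (ρ : ℕ∞) : ℝ :=
  ρ.recTopCoe 0 fun r =>
    δ ^ (t - r) * γ ((if r < t then 1 else 0) + candBetween p lam tau (r + 1) (t - 1))


/-!
On a candidate step `t` the threshold is at most `(τ - λ)` times
`w₀ γ̃_{S₀(t)} + (α - w₀) ∑_j δ^{t-ρ_j} γ_{S_j(t)}`, so the left-hand side splits into a `γ̃` part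
weighted by `w₀` and a `γ` part weighted by `α - w₀`. Along the candidates `S₀(t)` runs through
`1, 2, …, K`, and a candidate `t` is followed by at most `T - t` others, so the discounted `γ̃` part
is at most `∑_{i ≤ K} δ^{K-i} γ̃_i ≤ 1`. In the `γ` part each rejection time `ρ_j ≤ T` collects
`δ^{T-ρ_j} (γ_1 + γ_2 + ⋯) ≤ δ^{T-ρ_j}`, and these sum to `R_δ(T)`. Hence the left-hand side is
at most `w₀ + (α - w₀) R_δ(T) ≤ α max(R_δ(T), 1)`.
-/

open Finset

theorem sum_Icc_succ_top_pow_sub_mul {M : Type*} [CommSemiring M] (δ : M) {a T : ℕ}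
    (h : a ≤ T + 1) (x : ℕ → M) :
    ∑ t ∈ Icc a (T + 1), δ ^ (T + 1 - t) * x t
      = δ * ∑ t ∈ Icc a T, δ ^ (T - t) * x t + x (T + 1) := by
  rw [sum_Icc_succ_top h, Nat.sub_self, pow_zero, one_mul, mul_sum]
  congr 1
  refine sum_congr rfl fun t ht => ?_
  rw [Nat.sub_add_comm (mem_Icc.1 ht).2, pow_succ]
  ring

section Candidates

variable (p : ℕ → ℝ) (lam tau : ℝ)

theorem candBetween_eq_zero {a b : ℕ} (h : b < a) : candBetween p lam tau a b = 0 := by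
  simp [candBetween, Icc_eq_empty_of_lt h]

theorem candBetween_succ_right {a b : ℕ} (h : a ≤ b + 1) :
    candBetween p lam tau a (b + 1) =
      candBetween p lam tau a b + if lam < p (b + 1) ∧ p (b + 1) ≤ tau then 1 else 0 := by
  unfold candBetween
  rw [← insert_Icc_right_eq_Icc_add_one h, filter_insert]
  split_ifs
  · rw [card_insert_of_notMem (by simp)]
  · rfl

theorem sum_pow_sub_mul_candidate_le {δ : ℝ} (hδ₀ : 0 ≤ δ) (hδ₁ : δ ≤ 1) (g : ℕ → ℝ)
    (hg : ∀ i, 1 ≤ i → 0 ≤ g i) (r T : ℕ) :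
    ∑ t ∈ Icc (r + 1) T, δ ^ (T - t) * ((if lam < p t ∧ p t ≤ tau then (1 : ℝ) else 0) *
        g (1 + candBetween p lam tau (r + 1) (t - 1)))
      ≤ ∑ i ∈ Icc 1 (candBetween p lam tau (r + 1) T),
          δ ^ (candBetween p lam tau (r + 1) T - i) * g i := by
  induction T with
  | zero => simp [candBetween_eq_zero]
  | succ T ih =>
    obtain hrT | hrT := le_or_gt (r + 1) (T + 1)
    · set K := candBetween p lam tau (r + 1) T
      have hδih := mul_le_mul_of_nonneg_left ih hδ₀
      rw [sum_Icc_succ_top_pow_sub_mul δ hrT, candBetween_succ_right p lam tau hrT,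
        Nat.add_sub_cancel]
      -- a candidate step appends `g (K + 1)` to both sides; any other step only discounts the left
      split_ifs
      · rw [sum_Icc_succ_top_pow_sub_mul δ (by omega : 1 ≤ K + 1), one_mul, add_comm 1 K]
        linarith
      · have hK : 0 ≤ ∑ i ∈ Icc 1 K, δ ^ (K - i) * g i :=
          sum_nonneg fun i hi => mul_nonneg (pow_nonneg hδ₀ _) (hg i (mem_Icc.1 hi).1)
        rw [zero_mul, add_zero, add_zero]
        nlinarith
    · simp [Icc_eq_empty_of_lt hrT, candBetween_eq_zero p lam tau hrT]

theorem sum_pow_sub_mul_candCount0_le_one {δ : ℝ} (hδ₀ : 0 ≤ δ) (hδ₁ : δ ≤ 1) (γ' : ℕ → ℝ)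
    (hγ'_nonneg : ∀ t, 1 ≤ t → 0 ≤ γ' t)
    (hγ'_sum : ∀ T : ℕ, 1 ≤ T → ∑ t ∈ Icc 1 T, δ ^ (T - t) * γ' t ≤ 1) (T : ℕ) :
    ∑ t ∈ Icc 1 T, δ ^ (T - t) *
        ((if lam < p t ∧ p t ≤ tau then (1 : ℝ) else 0) * γ' (candCount0 p lam tau t)) ≤ 1 := by
  refine (sum_pow_sub_mul_candidate_le p lam tau hδ₀ hδ₁ γ' hγ'_nonneg 0 T).trans ?_
  rcases Nat.eq_zero_or_pos (candBetween p lam tau 1 T) with h | h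
  · simp [h]
  · exact hγ'_sum _ h

end Candidates

theorem sInf_natCast_setOf_eq_natCast_iff {P : ℕ → Prop} {m : ℕ} :
    sInf {n : ℕ∞ | ∃ k : ℕ, n = k ∧ P k} = m ↔ P m ∧ ∀ k < m, ¬ P k := by
  constructor
  · intro h
    have hne : {n : ℕ∞ | ∃ k : ℕ, n = k ∧ P k}.Nonempty := by
      by_contra hempty
      rw [Set.not_nonempty_iff_eq_empty.1 hempty, sInf_empty] at h
      exact ENat.top_ne_natCast m h
    obtain ⟨k, hkm, hk⟩ := h ▸ csInf_mem hne
    rw [show k = m by exact_mod_cast hkm.symm] at hk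
    refine ⟨hk, fun k' hk' hPk' => ?_⟩
    have : (m : ℕ∞) ≤ k' := h ▸ sInf_le ⟨k', rfl, hPk'⟩
    exact absurd (ENat.natCast_le_natCast.1 this) (not_le.2 hk')
  · rintro ⟨hm, hmin⟩
    refine le_antisymm (sInf_le ⟨m, rfl, hm⟩) (le_sInf ?_)
    rintro _ ⟨k, rfl, hk⟩
    exact ENat.natCast_le_natCast.2 (not_lt.1 fun hkm => hmin k hkm hk)

section Rejections

variable (R : ℕ → ℝ)

noncomputable def rejCount (m : ℕ) : ℕ := #{i ∈ Icc 1 m | R i = 1}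

theorem sum_Icc_eq_rejCount (hR : ∀ t, R t = 0 ∨ R t = 1) (m : ℕ) :
    ∑ i ∈ Icc 1 m, R i = rejCount R m := by
  rw [rejCount, card_filter, Nat.cast_sum]
  refine sum_congr rfl fun i _ => ?_
  rcases hR i with h | h <;> simp [h]

theorem rejCount_zero : rejCount R 0 = 0 := by
  simp [rejCount]

theorem rejCount_succ (m : ℕ) :
    rejCount R (m + 1) = rejCount R m + if R (m + 1) = 1 then 1 else 0 := by
  unfold rejCount
  rw [← insert_Icc_right_eq_Icc_add_one (by omega), filter_insert]
  split_ifs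
  · rw [card_insert_of_notMem (by simp)]
  · rfl

theorem rejCount_le (m : ℕ) : rejCount R m ≤ m :=
  (card_filter_le _ _).trans (by simp)

theorem rejCount_mono : Monotone (rejCount R) := fun _ _ h =>
  card_le_card (filter_subset_filter _ (Icc_subset_Icc_right h))

theorem rejTime_eq_natCast_iff (hR : ∀ t, R t = 0 ∨ R t = 1) {j m : ℕ} (hj : 1 ≤ j) :
    rejTime R j = m ↔ R m = 1 ∧ rejCount R m = j := by
  simp only [rejTime, sum_Icc_eq_rejCount R hR, Nat.cast_le, sInf_natCast_setOf_eq_natCast_iff,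
    not_le]
  cases m with
  | zero => simp only [rejCount_zero]; omega
  | succ n =>
    rw [rejCount_succ]
    by_cases h : R (n + 1) = 1
    · simp only [h, if_true, true_and]
      refine ⟨fun ⟨hle, hmin⟩ => by have := hmin n (by omega); omega, fun hc => ⟨hc.ge, ?_⟩⟩
      exact fun k hk => (rejCount_mono R (by omega : k ≤ n)).trans_lt (by omega)
    · simp only [h, if_false, false_and, iff_false, not_and, add_zero]
      exact fun hle hmin => absurd (hmin n (by omega)) (not_lt.2 hle)

theorem tsum_rejTime_eq_sum (hR : ∀ t, R t = 0 ∨ R t = 1) (φ : ℕ∞ → ℝ) (hφ_top : φ ⊤ = 0)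
    {N : ℕ} (hφ : ∀ m : ℕ, N < m → φ m = 0) :
    ∑' j, φ (rejTime R (j + 1)) = ∑ m ∈ Icc 1 N, R m * φ m := by
  have hsupp : ∀ j, φ (rejTime R (j + 1)) ≠ 0 →
      ∃ m : ℕ, rejTime R (j + 1) = m ∧ R m = 1 ∧ rejCount R m = j + 1 ∧ m ≤ N := by
    intro j hj
    cases hρ : rejTime R (j + 1) with
    | top => exact absurd (hρ ▸ hφ_top) hj
    | coe m =>
      obtain ⟨hRm, hcm⟩ := (rejTime_eq_natCast_iff R hR (by omega)).1 hρ
      exact ⟨m, rfl, hRm, hcm, not_lt.1 fun hNm => hρ ▸ hj <| hφ m hNm⟩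
  rw [tsum_eq_sum' (s := range N) fun j hj => ?_]
  -- `j ↦ ρ_{j+1}` matches the nonzero terms with the rejection times in `[1, N]`
  · refine sum_bij_ne_zero (fun j _ _ => (rejTime R (j + 1)).toNat) ?_ ?_ ?_ ?_
    · intro j _ hj
      obtain ⟨m, hρ, -, hcm, hmN⟩ := hsupp j hj
      have := rejCount_le R m
      rw [hρ, ENat.toNat_natCast]
      exact mem_Icc.2 ⟨by omega, hmN⟩
    · intro j₁ _ hj₁ j₂ _ hj₂ heq
      obtain ⟨m₁, hρ₁, -, hc₁, -⟩ := hsupp j₁ hj₁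
      obtain ⟨m₂, hρ₂, -, hc₂, -⟩ := hsupp j₂ hj₂
      rw [hρ₁, hρ₂, ENat.toNat_natCast, ENat.toNat_natCast] at heq
      subst heq
      omega
    · intro m hm hne
      have hRm : R m = 1 := (hR m).resolve_left (left_ne_zero_of_mul hne)
      obtain ⟨hm₁, hmN⟩ := mem_Icc.1 hm
      have hcm : 1 ≤ rejCount R m := by
        obtain ⟨n, rfl⟩ : ∃ n, m = n + 1 := ⟨m - 1, by omega⟩
        rw [rejCount_succ, if_pos hRm]
        omega
      have hρ : rejTime R (rejCount R m - 1 + 1) = m :=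
        (rejTime_eq_natCast_iff R hR (by omega)).2 ⟨hRm, by omega⟩
      have := rejCount_le R m
      exact ⟨rejCount R m - 1, mem_range.2 (by omega), hρ ▸ right_ne_zero_of_mul hne,
        by rw [hρ, ENat.toNat_natCast]⟩
    · intro j _ hj
      obtain ⟨m, hρ, hRm, -, -⟩ := hsupp j hj
      rw [hρ, ENat.toNat_natCast, hRm, one_mul]
  · obtain ⟨m, -, -, hcm, hmN⟩ := hsupp j hj
    have := rejCount_le R m
    exact mem_range.2 (by omega)

end Rejections

section Addis

variable (δ : ℝ) (γ : ℤ → ℝ) (p : ℕ → ℝ) (lam tau : ℝ)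

theorem addisTerm_natCast (t m : ℕ) :
    addisTerm δ γ p lam tau t m =
      δ ^ (t - m) * γ ((if m < t then 1 else 0) + candBetween p lam tau (m + 1) (t - 1)) :=
  rfl

theorem addisTerm_eq_zero_of_le (hγ₀ : γ 0 = 0) {t m : ℕ} (h : t ≤ m) :
    addisTerm δ γ p lam tau t m = 0 := by
  rw [addisTerm_natCast, if_neg (by omega), candBetween_eq_zero p lam tau (by omega)]
  simp [hγ₀]

theorem sum_pow_sub_mul_addisTerm_le (hδ₀ : 0 ≤ δ) (hγ_nonneg : ∀ t, 0 ≤ γ t) (hγ₀ : γ 0 = 0)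
    (hγ_sum : ∀ T : ℕ, ∑ t ∈ Icc 1 T, γ (t : ℤ) ≤ 1) {m T : ℕ} (hmT : m ≤ T) :
    ∑ t ∈ Icc 1 T, δ ^ (T - t) *
        ((if lam < p t ∧ p t ≤ tau then (1 : ℝ) else 0) * addisTerm δ γ p lam tau t m)
      ≤ δ ^ (T - m) := by
  have hshift : ∑ t ∈ Icc 1 T, δ ^ (T - t) *
        ((if lam < p t ∧ p t ≤ tau then (1 : ℝ) else 0) * addisTerm δ γ p lam tau t m)
      = δ ^ (T - m) * ∑ t ∈ Icc (m + 1) T, (1 : ℝ) ^ (T - t) *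
        ((if lam < p t ∧ p t ≤ tau then (1 : ℝ) else 0) *
          γ ((1 + candBetween p lam tau (m + 1) (t - 1) : ℕ) : ℤ)) := by
    rw [← sum_subset (Icc_subset_Icc_left (by omega : 1 ≤ m + 1)) fun t ht hnt => ?_, mul_sum]
    · refine sum_congr rfl fun t ht => ?_
      obtain ⟨hmt, htT⟩ := mem_Icc.1 ht
      rw [addisTerm_natCast, if_pos (show m < t by omega), one_pow, one_mul,
        show T - m = (T - t) + (t - m) by omega, pow_add]
      push_cast
      ring
    · rw [addisTerm_eq_zero_of_le δ γ p lam tau hγ₀ (by simp_all), mul_zero, mul_zero]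
  rw [hshift]
  refine (mul_le_mul_of_nonneg_left (sum_pow_sub_mul_candidate_le p lam tau zero_le_one le_rfl
    _ (fun i _ => hγ_nonneg _) m T) (pow_nonneg hδ₀ _)).trans ?_
  simpa using mul_le_mul_of_nonneg_left (hγ_sum (candBetween p lam tau (m + 1) T))
    (pow_nonneg hδ₀ (T - m))

theorem sum_pow_sub_mul_tsum_addisTerm_le (hδ₀ : 0 ≤ δ) (hγ_nonneg : ∀ t, 0 ≤ γ t)
    (hγ₀ : γ 0 = 0) (hγ_sum : ∀ T : ℕ, ∑ t ∈ Icc 1 T, γ (t : ℤ) ≤ 1)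
    (R : ℕ → ℝ) (hR : ∀ t, R t = 0 ∨ R t = 1) (T : ℕ) :
    ∑ t ∈ Icc 1 T, δ ^ (T - t) * ((if lam < p t ∧ p t ≤ tau then (1 : ℝ) else 0) *
        ∑' j, addisTerm δ γ p lam tau t (rejTime R (j + 1)))
      ≤ ∑ t ∈ Icc 1 T, δ ^ (T - t) * R t := by
  have hreindex : ∀ t ∈ Icc 1 T, ∑' j, addisTerm δ γ p lam tau t (rejTime R (j + 1))
      = ∑ m ∈ Icc 1 T, R m * addisTerm δ γ p lam tau t m := fun t ht =>
    tsum_rejTime_eq_sum R hR _ rfl fun m hm =>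
      addisTerm_eq_zero_of_le δ γ p lam tau hγ₀ (by have := (mem_Icc.1 ht).2; omega)
  calc _ = ∑ m ∈ Icc 1 T, R m * ∑ t ∈ Icc 1 T, δ ^ (T - t) *
          ((if lam < p t ∧ p t ≤ tau then (1 : ℝ) else 0) * addisTerm δ γ p lam tau t m) := by
        rw [sum_congr rfl fun t ht => by rw [hreindex t ht]]
        simp only [mul_sum]
        rw [sum_comm]
        exact sum_congr rfl fun _ _ => sum_congr rfl fun _ _ => by ring
    _ ≤ ∑ m ∈ Icc 1 T, R m * δ ^ (T - m) := sum_le_sum fun m hm =>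
        mul_le_mul_of_nonneg_left
          (sum_pow_sub_mul_addisTerm_le δ γ p lam tau hδ₀ hγ_nonneg hγ₀ hγ_sum (mem_Icc.1 hm).2)
          (by rcases hR m with h | h <;> simp [h])
    _ = _ := sum_congr rfl fun _ _ => mul_comm _ _

end Addis

theorem addis_decay_standard_fdr_oracle_bound_general (δ α w₀ lam tau : ℝ)
    (hδ : δ ∈ Set.Ioc (0 : ℝ) 1)
    (hw₀ : w₀ ∈ Set.Ioo (0 : ℝ) α)
    (hlamtau : lam < tau)
    (γ : ℤ → ℝ) (hγ_nonneg : ∀ t, 0 ≤ γ t) (hγ_zero : ∀ t : ℤ, t ≤ 0 → γ t = 0)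
    (hγ_sum : ∀ T : ℕ, ∑ t ∈ Finset.Icc 1 T, γ (t : ℤ) ≤ 1)
    (γ' : ℕ → ℝ) (hγ'_pos : ∀ t, 1 ≤ t → 0 < γ' t)
    (hγ'_sum : ∀ T : ℕ, 1 ≤ T → ∑ t ∈ Finset.Icc 1 T, δ ^ (T - t) * γ' t ≤ 1)
    (p : ℕ → ℝ)
    (R : ℕ → ℝ) (hR : ∀ t, R t = 0 ∨ R t = 1)
    (A : ℕ → ℝ)
    (hA : ∀ t : ℕ,
      A t = min ((tau - lam) * (w₀ * γ' (candCount0 p lam tau t)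
              + (α - w₀) * ∑' j : ℕ, addisTerm δ γ p lam tau t (rejTime R (j + 1)))) lam)
    (T : ℕ) :
    ∑ t ∈ Finset.Icc 1 T,
        δ ^ (T - t) * A t * (if lam < p t ∧ p t ≤ tau then (1 : ℝ) else 0) / (tau - lam)
      ≤ α * max (∑ t ∈ Finset.Icc 1 T, δ ^ (T - t) * R t) 1 := by
  obtain ⟨hδ₀, hδ₁⟩ := hδ
  obtain ⟨hw₀, hw₀α⟩ := hw₀
  set F : ℕ → ℝ := fun t => ∑' j, addisTerm δ γ p lam tau t (rejTime R (j + 1))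
  set ind : ℕ → ℝ := fun t => if lam < p t ∧ p t ≤ tau then 1 else 0
  have hterm (t : ℕ) : δ ^ (T - t) * A t * ind t / (tau - lam)
      ≤ δ ^ (T - t) * ind t * (w₀ * γ' (candCount0 p lam tau t) + (α - w₀) * F t) := by
    have hweight : 0 ≤ δ ^ (T - t) * ind t :=
      mul_nonneg (pow_nonneg hδ₀.le _) (by simp only [ind]; split_ifs <;> norm_num)
    rw [mul_right_comm, mul_div_assoc, hA t]
    refine mul_le_mul_of_nonneg_left ?_ hweight
    rw [div_le_iff₀ (sub_pos.2 hlamtau), mul_comm]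
    exact min_le_left _ _
  have hX := sum_pow_sub_mul_candCount0_le_one p lam tau hδ₀.le hδ₁ γ'
    (fun t ht => (hγ'_pos t ht).le) hγ'_sum T
  have hY := sum_pow_sub_mul_tsum_addisTerm_le δ γ p lam tau hδ₀.le hγ_nonneg (hγ_zero 0 le_rfl)
    hγ_sum R hR T
  calc _ ≤ w₀ * ∑ t ∈ Icc 1 T, δ ^ (T - t) * (ind t * γ' (candCount0 p lam tau t))
        + (α - w₀) * ∑ t ∈ Icc 1 T, δ ^ (T - t) * (ind t * F t) := by
        rw [mul_sum, mul_sum, ← sum_add_distrib]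
        exact sum_le_sum fun t _ => (hterm t).trans_eq (by ring)
    _ ≤ w₀ * max (∑ t ∈ Icc 1 T, δ ^ (T - t) * R t) 1
        + (α - w₀) * max (∑ t ∈ Icc 1 T, δ ^ (T - t) * R t) 1 := by
        gcongr
        · exact hX.trans (le_max_right _ _)
        · exact hY.trans (le_max_left _ _)
    _ = _ := by ring

/-- For any `w₀ ∈ (0, α)`, the thresholds
`α_t = [(τ−λ)(w₀ γ̃_{S_0(t)} + (α−w₀) ∑_{j≥1} δ^{t−ρ_j} γ_{S_j(t)})] ∧ λ`
satisfy `∑_{t=1}^T δ^{T−t} α_t 1{λ < p_t ≤ τ}/(τ−λ) ≤ α · max(R_δ(T), 1)`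
for every `T ≥ 1`. -/
theorem addis_decay_standard_fdr_oracle_bound (δ α w₀ lam tau : ℝ)
    (hδ : δ ∈ Set.Ioc (0 : ℝ) 1) (hα : α ∈ Set.Ioo (0 : ℝ) 1)
    (hw₀ : w₀ ∈ Set.Ioo (0 : ℝ) α)
    (hlam : 0 < lam) (hlamtau : lam < tau) (htau : tau < 1)
    (γ : ℤ → ℝ) (hγ_nonneg : ∀ t, 0 ≤ γ t) (hγ_zero : ∀ t : ℤ, t ≤ 0 → γ t = 0)
    (hγ_anti : ∀ s t : ℤ, 1 ≤ s → s ≤ t → γ t ≤ γ s)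
    (hγ_sum : ∀ T : ℕ, ∑ t ∈ Finset.Icc 1 T, γ (t : ℤ) ≤ 1)
    (γ' : ℕ → ℝ) (hγ'_pos : ∀ t, 1 ≤ t → 0 < γ' t)
    (hγ'_anti : ∀ s t : ℕ, 1 ≤ s → s ≤ t → γ' t ≤ γ' s)
    (hγ'_sum : ∀ T : ℕ, 1 ≤ T → ∑ t ∈ Finset.Icc 1 T, δ ^ (T - t) * γ' t ≤ 1)
    (p : ℕ → ℝ) (hp01 : ∀ t, p t ∈ Set.Icc (0 : ℝ) 1)
    (R : ℕ → ℝ) (hR : ∀ t, R t = 0 ∨ R t = 1)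
    (A : ℕ → ℝ)
    (hA : ∀ t : ℕ,
      A t = min ((tau - lam) * (w₀ * γ' (candCount0 p lam tau t)
              + (α - w₀) * ∑' j : ℕ, addisTerm δ γ p lam tau t (rejTime R (j + 1)))) lam)
    (T : ℕ) (hT : 1 ≤ T) :
    ∑ t ∈ Finset.Icc 1 T,
        δ ^ (T - t) * A t * (if lam < p t ∧ p t ≤ tau then (1 : ℝ) else 0) / (tau - lam)
      ≤ α * max (∑ t ∈ Finset.Icc 1 T, δ ^ (T - t) * R t) 1 :=
  addis_decay_standard_fdr_oracle_bound_general δ α w₀ lam tau hδ hw₀ hlamtau γ hγ_nonneg hγ_zero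
    hγ_sum γ' hγ'_pos hγ'_sum p R hR A hA T
end
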